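/- If a configuration on the n×m torus with n even and m odd is stable for 2D Minority, then the minimum energy of such a configuration is 2n, achieved by a configuration consisting of a checkerboard pattern wrapped around the odd dimension creating a vertical band of width 2 (i.e., any stable configuration c satisfies E(c) ≥ 2n, and some stable configuration attains E(c) = 2n). -/
import Mathlib


/-- The four von Neumann neighbors of a cell on the `n × m` torus. -/
def nbrs (n m : ℕ) (p : ZMod n × ZMod m) : List (ZMod n × ZMod m) :=
  [(p.1 + 1, p.2), (p.1 - 1, p.2), (p.1, p.2 + 1), (p.1, p.2 - 1)]

/-- The potential of a cell: the number of its four neighbors in the same state. -/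
def potential (n m : ℕ) (c : ZMod n × ZMod m → Bool) (p : ZMod n × ZMod m) : ℕ :=
  ((nbrs n m p).filter (fun q => c q == c p)).length

/-- The energy of a configuration: the sum of the potentials of all cells. -/
def energy (n m : ℕ) [NeZero n] [NeZero m] (c : ZMod n × ZMod m → Bool) : ℕ :=
  ∑ p : ZMod n × ZMod m, potential n m c p


lemma pot_eq (n m : ℕ) (c : ZMod n × ZMod m → Bool) (p : ZMod n × ZMod m) :
    potential n m c p =
      (if c (p.1 + 1, p.2) = c p then 1 else 0) +
      (if c (p.1 - 1, p.2) = c p then 1 else 0) +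
      (if c (p.1, p.2 + 1) = c p then 1 else 0) +
      (if c (p.1, p.2 - 1) = c p then 1 else 0) := by
  simp only [potential, nbrs, List.filter_cons, List.filter_nil, beq_iff_eq]
  split_ifs <;> simp_all

lemma odd_exists {m : ℕ} [NeZero m] (hm : Odd m) (f : ZMod m → Bool) :
    ∃ j : ZMod m, f (j + 1) = f j := by
  by_contra h
  push_neg at h
  have key : ∀ k : ℕ, f (k : ZMod m) = if Even k then f 0 else !f 0 := by
    intro k
    induction k with
    | zero => simp
    | succ k ih =>
      have h2 : f ((k : ZMod m) + 1) = !f (k : ZMod m) := by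
        have := h (k : ZMod m)
        cases hfk : f ((k : ZMod m) + 1) <;> cases hk2 : f (k : ZMod m) <;> simp_all
      rw [show ((k + 1 : ℕ) : ZMod m) = (k : ZMod m) + 1 by push_cast; ring, h2, ih]
      by_cases hk : Even k <;> simp [hk, Nat.even_add_one]
  have := key m
  rw [ZMod.natCast_self, if_neg (Nat.not_even_iff_odd.mpr hm)] at this
  simp at this


lemma lower (n m : ℕ) [NeZero n] [NeZero m] (hm : Odd m)
    (c : ZMod n × ZMod m → Bool) : 2 * n ≤ energy n m c := by
  have hswap : ∑ p : ZMod n × ZMod m, (if c (p.1, p.2 + 1) = c p then 1 else 0) =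
      ∑ p : ZMod n × ZMod m, (if c (p.1, p.2 - 1) = c p then 1 else 0) := by
    apply Fintype.sum_equiv ((Equiv.refl (ZMod n)).prodCongr (Equiv.addRight (1 : ZMod m)))
    intro p
    simp [eq_comm, Prod.map]
  have hrow : ∀ i : ZMod n,
      1 ≤ ∑ j : ZMod m, (if c (i, j + 1) = c (i, j) then 1 else 0) := by
    intro i
    obtain ⟨j0, hj0⟩ := odd_exists hm (fun j => c (i, j))
    calc (1:ℕ) = (if c (i, j0 + 1) = c (i, j0) then (1:ℕ) else 0) := by simp [hj0]
      _ ≤ _ := Finset.single_le_sum (f := fun j => if c (i, j + 1) = c (i, j) then (1:ℕ) else 0) (fun _ _ => Nat.zero_le _) (Finset.mem_univ j0)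
  calc 2 * n = 2 * ∑ i : ZMod n, 1 := by simp [ZMod.card]
    _ ≤ 2 * ∑ i : ZMod n, ∑ j : ZMod m, (if c (i, j + 1) = c (i, j) then 1 else 0) := by
        gcongr with i _; exact hrow i
    _ = 2 * ∑ p : ZMod n × ZMod m, (if c (p.1, p.2 + 1) = c p then 1 else 0) := by
        rw [Fintype.sum_prod_type]
    _ = ∑ p : ZMod n × ZMod m,
          ((if c (p.1, p.2 + 1) = c p then 1 else 0) +
           (if c (p.1, p.2 - 1) = c p then 1 else 0)) := by
        rw [Finset.sum_add_distrib, ← hswap]; ring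
    _ ≤ energy n m c := by
        apply Finset.sum_le_sum
        intro p _
        rw [pot_eq]
        split_ifs <;> omega

section upper
variable (n m : ℕ) [NeZero n] [NeZero m]

/-- checkerboard wrapped around the odd dimension -/
def cb (p : ZMod n × ZMod m) : Bool := decide ((p.1.val + p.2.val) % 2 = 0)

lemma val_add_one_mod2 {k : ℕ} [NeZero k] (hk : 2 ∣ k) (a : ZMod k) :
    (a + 1).val % 2 = (a.val + 1) % 2 := by
  have h2 : 1 < k := by
    have := NeZero.pos k; omega
  haveI : Fact (1 < k) := ⟨h2⟩
  rw [ZMod.val_add, ZMod.val_one, Nat.mod_mod_of_dvd _ hk]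

lemma val_sub_one_mod2 {k : ℕ} [NeZero k] (hk : 2 ∣ k) (a : ZMod k) :
    (a - 1).val % 2 = (a.val + 1) % 2 := by
  have := val_add_one_mod2 hk (a - 1)
  rw [sub_add_cancel] at this
  omega

lemma val_add_one {k : ℕ} [NeZero k] (hk : 2 ≤ k) (b : ZMod k) :
    (b + 1).val = (b.val + 1) % k := by
  haveI : Fact (1 < k) := ⟨hk⟩
  rw [ZMod.val_add, ZMod.val_one]

lemma val_sub_one {k : ℕ} [NeZero k] (hk : 2 ≤ k) (b : ZMod k) :
    (b - 1).val = if b.val = 0 then k - 1 else b.val - 1 := by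
  have h := val_add_one hk (b - 1)
  rw [sub_add_cancel] at h
  have hlt : (b - 1).val < k := ZMod.val_lt _
  have hblt : b.val < k := ZMod.val_lt b
  rcases Nat.lt_or_ge ((b-1).val + 1) k with h1 | h1
  · rw [Nat.mod_eq_of_lt h1] at h
    split_ifs with h0 <;> omega
  · have : (b - 1).val + 1 = k := by omega
    rw [this, Nat.mod_self] at h
    split_ifs with h0 <;> omega

lemma pot_cb (hn : Even n) (hm : Odd m) (hm3 : 3 ≤ m) (p : ZMod n × ZMod m) :
    potential n m (cb n m) p =
      (if p.2.val = 0 then 1 else 0) + (if p.2.val = m - 1 then 1 else 0) := by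
  have hn2 : 2 ∣ n := hn.two_dvd
  have hm2 : m % 2 = 1 := Nat.odd_iff.mp hm
  have hv1 := val_add_one_mod2 hn2 p.1
  have hv2 := val_sub_one_mod2 hn2 p.1
  have hw1 := val_add_one (by omega : 2 ≤ m) p.2
  have hw2 := val_sub_one (by omega : 2 ≤ m) p.2
  have hmlt : p.2.val < m := ZMod.val_lt p.2
  rw [pot_eq]
  have e1 : cb n m (p.1 + 1, p.2) ≠ cb n m p := by
    simp only [cb, ne_eq, decide_eq_decide]; omega
  have e2 : cb n m (p.1 - 1, p.2) ≠ cb n m p := by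
    simp only [cb, ne_eq, decide_eq_decide]; omega
  rw [if_neg e1, if_neg e2]
  by_cases hz : p.2.val = 0
  · have hnm : p.2.val ≠ m - 1 := by omega
    have hb1 : (p.2 + 1).val = 1 := by rw [hw1, hz]; exact Nat.mod_eq_of_lt (by omega)
    have hb2 : (p.2 - 1).val = m - 1 := by rw [hw2, if_pos hz]
    have e3 : cb n m (p.1, p.2 + 1) ≠ cb n m p := by
      simp only [cb, ne_eq, decide_eq_decide]; omega
    have e4 : cb n m (p.1, p.2 - 1) = cb n m p := by
      simp only [cb, decide_eq_decide]; omega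
    rw [if_neg e3, if_pos e4, if_pos hz, if_neg hnm]
  · have hb2 : (p.2 - 1).val = p.2.val - 1 := by rw [hw2, if_neg hz]
    have e4 : cb n m (p.1, p.2 - 1) ≠ cb n m p := by
      simp only [cb, ne_eq, decide_eq_decide]; omega
    by_cases hl : p.2.val = m - 1
    · have hb1 : (p.2 + 1).val = 0 := by
        rw [hw1, hl, show m - 1 + 1 = m by omega, Nat.mod_self]
      have e3 : cb n m (p.1, p.2 + 1) = cb n m p := by
        simp only [cb, decide_eq_decide]; omega
      rw [if_pos e3, if_neg e4, if_neg hz, if_pos hl]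
    · have hb1 : (p.2 + 1).val = p.2.val + 1 := by
        rw [hw1]; exact Nat.mod_eq_of_lt (by omega)
      have e3 : cb n m (p.1, p.2 + 1) ≠ cb n m p := by
        simp only [cb, ne_eq, decide_eq_decide]; omega
      rw [if_neg e3, if_neg e4, if_neg hz, if_neg hl]

end upper

lemma energy_cb (n m : ℕ) [NeZero n] [NeZero m] (hn : Even n) (hm : Odd m)
    (hm3 : 3 ≤ m) : energy n m (cb n m) = 2 * n := by
  have hsum0 : ∑ j : ZMod m, (if j.val = 0 then (1:ℕ) else 0) = 1 := by
    rw [show (fun j : ZMod m => if j.val = 0 then (1:ℕ) else 0)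
        = fun j : ZMod m => if j = 0 then (1:ℕ) else 0 from
        funext fun j => by simp [ZMod.val_eq_zero]]
    rw [Finset.sum_ite_eq' Finset.univ (0 : ZMod m) (fun _ => (1:ℕ))]
    simp
  have hsum1 : ∑ j : ZMod m, (if j.val = m - 1 then (1:ℕ) else 0) = 1 := by
    have hcast : ((m - 1 : ℕ) : ZMod m).val = m - 1 := ZMod.val_cast_of_lt (by omega)
    rw [show (fun j : ZMod m => if j.val = m - 1 then (1:ℕ) else 0)
        = fun j : ZMod m => if j = ((m - 1 : ℕ) : ZMod m) then (1:ℕ) else 0 from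
        funext fun j => by
          congr 1
          rw [eq_iff_iff]
          constructor
          · intro h; exact ZMod.val_injective m (by rw [h, hcast])
          · intro h; rw [h, hcast]]
    rw [Finset.sum_ite_eq' Finset.univ _ (fun _ => (1:ℕ))]
    simp
  unfold energy
  rw [Fintype.sum_prod_type]
  have : ∀ i : ZMod n, ∑ j : ZMod m, potential n m (cb n m) (i, j) = 2 := by
    intro i
    rw [show (fun j : ZMod m => potential n m (cb n m) (i, j))
        = fun j : ZMod m => (if j.val = 0 then (1:ℕ) else 0) +
            (if j.val = m - 1 then 1 else 0) from
        funext fun j => pot_cb n m hn hm hm3 (i, j)]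
    rw [Finset.sum_add_distrib, hsum0, hsum1]
  rw [Finset.sum_congr rfl (fun i _ => this i)]
  simp [ZMod.card, mul_comm]


/-- On a torus with n even and m odd (m at least 3), every configuration has energy
at least 2n, and some stable configuration (a checkerboard wrapped around the odd
dimension) attains energy exactly 2n; hence the minimum energy of a stable
configuration is exactly 2n. -/
theorem stmt18 (n m : ℕ) [NeZero n] [NeZero m] (hn : Even n) (hm : Odd m)
    (hm3 : 3 ≤ m) :
    (∀ c : ZMod n × ZMod m → Bool, (∀ p, potential n m c p ≤ 1) →
      2 * n ≤ energy n m c) ∧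
    (∃ c : ZMod n × ZMod m → Bool, (∀ p, potential n m c p ≤ 1) ∧
      energy n m c = 2 * n) := by
  constructor
  · intro c _
    exact lower n m hm c
  · refine ⟨cb n m, fun p => ?_, energy_cb n m hn hm hm3⟩
    rw [pot_cb n m hn hm hm3 p]
    split_ifs <;> omega
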